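/- Let σ be an n-cycle on {1,...,n} with n ≥ 2. If a quandle homomorphism f: P_n^σ → P_n^σ satisfies f(k) = 0 for some k ≠ 0, then f is the zero map (f(x) = 0 for all x). -/

import Mathlib

/-- The operation of `P_n^σ` on `{0,1,...,n}`: `x*y = x` if `y ≠ 0`, `x*0 = σ x`
(with `σ` a permutation fixing `0`, encoding a permutation of `{1,...,n}`). -/
def pOp {n : ℕ} (σ : Equiv.Perm (Fin (n + 1))) (x y : Fin (n + 1)) : Fin (n + 1) :=
  if y = 0 then σ x else x

section pOp

variable {n : ℕ} (σ : Equiv.Perm (Fin (n + 1)))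

theorem pOp_zero (x : Fin (n + 1)) : pOp σ x 0 = σ x :=
  if_pos rfl

theorem pOp_of_ne_zero (x : Fin (n + 1)) {y : Fin (n + 1)} (hy : y ≠ 0) : pOp σ x y = x :=
  if_neg hy

theorem isFixedPt_of_hom_apply_eq_zero {f : Fin (n + 1) → Fin (n + 1)}
    (hf : ∀ x y, f (pOp σ x y) = pOp σ (f x) (f y))
    {k : Fin (n + 1)} (hk : k ≠ 0) (hfk : f k = 0) (x : Fin (n + 1)) :
    Function.IsFixedPt σ (f x) :=
  calc σ (f x) = pOp σ (f x) (f k) := by rw [hfk, pOp_zero]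
    _ = f (pOp σ x k) := (hf x k).symm
    _ = f x := by rw [pOp_of_ne_zero σ x hk]

end pOp

theorem hom_zero_of_positive_zero_general {n : ℕ}
    (σ : Equiv.Perm (Fin (n + 1)))
    (hmove : ∀ x : Fin (n + 1), x ≠ 0 → σ x ≠ x)
    (f : Fin (n + 1) → Fin (n + 1))
    (hf : ∀ x y, f (pOp σ x y) = pOp σ (f x) (f y))
    (k : Fin (n + 1)) (hk : k ≠ 0) (hfk : f k = 0) :
    ∀ x, f x = 0 := fun x => by
  by_contra hx
  exact hmove (f x) hx (isFixedPt_of_hom_apply_eq_zero σ hf hk hfk x)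

/-- If `σ` is an `n`-cycle on `{1,...,n}` (`n ≥ 2`) and a quandle endomorphism `f`
of `P_n^σ` sends some `k ≠ 0` to `0`, then `f` is the zero map. -/
theorem hom_zero_of_positive_zero {n : ℕ} (hn : 2 ≤ n)
    (σ : Equiv.Perm (Fin (n + 1))) (hσ0 : σ 0 = 0)
    (hcyc : σ.IsCycle) (hmove : ∀ x : Fin (n + 1), x ≠ 0 → σ x ≠ x)
    (f : Fin (n + 1) → Fin (n + 1))
    (hf : ∀ x y, f (pOp σ x y) = pOp σ (f x) (f y))
    (k : Fin (n + 1)) (hk : k ≠ 0) (hfk : f k = 0) :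
    ∀ x, f x = 0 :=
  hom_zero_of_positive_zero_general σ hmove f hf k hk hfk
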